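/- arXiv:math/0305258 — 2 statements merged into one kernel-verified Lean document; each statement's English description precedes it below -/
import Mathlib

section
/- Let G be a group of unipotent elements of GL(n, ℂ) (every element g of G satisfies (g - 1)^n = 0, with G a subgroup of GL(n,ℂ)). Then there exists a nonzero vector v ∈ ℂ^n fixed by every element of G. -/
/-!
The differences `g - 1`, `g ∈ G`, span a space `N` of endomorphisms closed under multiplication,
since `(g - 1) * (h - 1) = (g * h - 1) - (g - 1) - (h - 1)`. Each `g - 1` is nilpotent, hence
traceless, so the trace vanishes on `N` and in particular on all powers of an element of `N`; in
characteristic zero this forces every element of `N` to be nilpotent. Engel's theorem then gives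
a nonzero vector killed by all of `N`, that is, fixed by all of `G`.
-/

open Module Polynomial LinearMap

section TracePowers

variable {K V : Type*} [Field K] [AddCommGroup V] [Module K V] [FiniteDimensional K V]

theorem LinearMap.trace_restrict_eq_of_range_le {f : End K V} {W : Submodule K V}
    (hfW : range f ≤ W) (h : ∀ v ∈ W, f v ∈ W) :
    trace K W (f.restrict h) = trace K V f := by
  have hf : f = W.subtype ∘ₗ f.codRestrict W (fun v ↦ hfW (mem_range_self f v)) := rfl
  conv_rhs => rw [hf, trace_comp_comm']
  rfl

theorem Module.End.trace_aeval_eq_coeff_zero_mul_finrank {f : End K V}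
    (h : ∀ k, 0 < k → trace K V (f ^ k) = 0) (p : K[X]) :
    trace K V (aeval f p) = p.coeff 0 * finrank K V := by
  rw [aeval_eq_sum_range, map_sum, Finset.sum_range_succ', Finset.sum_eq_zero
    fun i _ ↦ by rw [map_smul, h (i + 1) i.succ_pos, smul_zero]]
  simp [trace_one]

variable [CharZero K]

theorem Module.End.range_ne_top_of_trace_pow_eq_zero [Nontrivial V] {f : End K V}
    (h : ∀ k, 0 < k → trace K V (f ^ k) = 0) : range f ≠ ⊤ := by
  -- Cayley–Hamilton: `0 = trace (χ_f(f)) = χ_f(0) * dim V`, so `0` is an eigenvalue.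
  have hcoeff : f.charpoly.coeff 0 = 0 := by
    have := f.trace_aeval_eq_coeff_zero_mul_finrank h f.charpoly
    rw [aeval_self_charpoly, map_zero, eq_comm, mul_eq_zero] at this
    exact this.resolve_right (Nat.cast_ne_zero.mpr finrank_pos.ne')
  have hker : ker f ≠ ⊥ := by
    have : f.HasEigenvalue 0 := by
      rw [Module.End.hasEigenvalue_iff_isRoot_charpoly, IsRoot, ← coeff_zero_eq_eval_zero, hcoeff]
    rwa [Module.End.hasEigenvalue_iff, Module.End.eigenspace_zero] at this
  rwa [Ne, range_eq_top, ← injective_iff_surjective, ← ker_eq_bot]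

theorem Module.End.isNilpotent_of_trace_pow_eq_zero {f : End K V}
    (h : ∀ k, 0 < k → trace K V (f ^ k) = 0) : IsNilpotent f := by
  induction hd : finrank K V using Nat.strong_induction_on generalizing V with
  | _ d ih =>
  rcases subsingleton_or_nontrivial V with hV | hV
  · exact ⟨1, Subsingleton.elim _ _⟩
  have hW : ∀ v ∈ range f, f v ∈ range f := fun v _ ↦ mem_range_self f v
  have hlt : finrank K (range f) < d :=
    hd ▸ Submodule.finrank_lt (range_ne_top_of_trace_pow_eq_zero h)
  have htrW : ∀ k, 0 < k → trace K (range f) (f.restrict hW ^ k) = 0 := by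
    intro k hk
    obtain ⟨j, rfl⟩ := Nat.exists_eq_succ_of_ne_zero hk.ne'
    have hrange : range (f ^ (j + 1)) ≤ range f := by
      rw [pow_succ', Module.End.mul_eq_comp]
      exact range_comp_le_range (f ^ j) f
    rw [Module.End.pow_restrict, trace_restrict_eq_of_range_le hrange, h _ hk]
  obtain ⟨m, hm⟩ := ih _ hlt htrW rfl
  refine ⟨m + 1, LinearMap.ext fun v ↦ ?_⟩
  have := congr($hm ⟨f v, mem_range_self f v⟩)
  rw [Module.End.pow_restrict, restrict_apply] at this
  simpa [pow_succ] using congr(Subtype.val $this)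

end TracePowers

section Engel

attribute [local instance] LieRing.ofAssociativeRing

-- Engel's theorem, for `N` as a Lie algebra under the commutator.
theorem NonUnitalSubalgebra.exists_ne_zero_forall_apply_eq_zero {R M : Type*} [CommRing R]
    [AddCommGroup M] [Module R M] [IsNoetherian R M] [Nontrivial M]
    (N : NonUnitalSubalgebra R (End R M))
    (hnil : ∀ x ∈ N, IsNilpotent x) : ∃ v : M, v ≠ 0 ∧ ∀ x ∈ N, x v = 0 := by
  let L : LieSubalgebra R (End R M) :=
    { N with lie_mem' := fun hx hy ↦ N.sub_mem (N.mul_mem hx hy) (N.mul_mem hy hx) }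
  have : LieModule.IsNilpotent L M :=
    LieModule.isNilpotent_iff_forall'.mpr fun x ↦ hnil x x.2
  have := LieModule.nontrivial_max_triv_of_isNilpotent R L M
  obtain ⟨⟨v, hv⟩, hv0⟩ := exists_ne (0 : LieModule.maxTrivSubmodule R L M)
  refine ⟨v, fun h ↦ hv0 (by simp [h]), fun x hx ↦ ?_⟩
  exact (LieModule.mem_maxTrivSubmodule R L M v).mp hv ⟨x, hx⟩

end Engel

section Unipotent

variable {K V : Type*} [Field K] [AddCommGroup V] [Module K V] [FiniteDimensional K V]

theorem NonUnitalSubalgebra.isNilpotent_of_forall_trace_eq_zero [CharZero K]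
    (N : NonUnitalSubalgebra K (End K V)) (htr : ∀ x ∈ N, trace K V x = 0)
    {x : End K V} (hx : x ∈ N) : IsNilpotent x := by
  have hpow : ∀ k, x ^ (k + 1) ∈ N := fun k ↦ by
    induction k with
    | zero => simpa using hx
    | succ k ih => exact pow_succ x (k + 1) ▸ N.mul_mem ih hx
  refine Module.End.isNilpotent_of_trace_pow_eq_zero fun k hk ↦ htr _ ?_
  obtain ⟨k, rfl⟩ := Nat.exists_eq_succ_of_ne_zero hk.ne'
  exact hpow k

theorem Submodule.mul_mem_span_sub_one {R A : Type*} [CommRing R] [Ring A] [Algebra R A]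
    (S : Submonoid A) {x y : A} (hx : x ∈ span R ((· - 1) '' (S : Set A)))
    (hy : y ∈ span R ((· - 1) '' (S : Set A))) :
    x * y ∈ span R ((· - 1) '' (S : Set A)) := by
  suffices span R ((· - 1) '' (S : Set A)) * span R ((· - 1) '' (S : Set A)) ≤
      span R ((· - 1) '' (S : Set A)) from this (mul_mem_mul hx hy)
  rw [span_mul_span, span_le]
  rintro _ ⟨_, ⟨g, hg, rfl⟩, _, ⟨h, hh, rfl⟩, rfl⟩
  show (g - 1) * (h - 1) ∈ _
  rw [show (g - 1) * (h - 1) = (g * h - 1) - (g - 1) - (h - 1) by noncomm_ring]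
  exact sub_mem (sub_mem (subset_span ⟨_, S.mul_mem hg hh, rfl⟩) (subset_span ⟨g, hg, rfl⟩))
    (subset_span ⟨h, hh, rfl⟩)

theorem Submonoid.exists_ne_zero_forall_apply_eq_self_of_isNilpotent_sub_one [CharZero K]
    [Nontrivial V] (S : Submonoid (End K V)) (hS : ∀ g ∈ S, IsNilpotent (g - 1)) :
    ∃ v : V, v ≠ 0 ∧ ∀ g ∈ S, g v = v := by
  let N := (Submodule.span K ((· - 1) '' (S : Set (End K V)))).toNonUnitalSubalgebra
    fun _ _ ↦ Submodule.mul_mem_span_sub_one S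
  have htr : ∀ x ∈ N, trace K V x = 0 := fun x hx ↦
    (Submodule.span_le (p := ker (trace K V))).mpr
      (by rintro _ ⟨g, hg, rfl⟩; exact (isNilpotent_trace_of_isNilpotent (hS g hg)).eq_zero) hx
  obtain ⟨v, hv0, hv⟩ := N.exists_ne_zero_forall_apply_eq_zero
    fun x hx ↦ N.isNilpotent_of_forall_trace_eq_zero htr hx
  refine ⟨v, hv0, fun g hg ↦ ?_⟩
  have := hv (g - 1) (Submodule.subset_span ⟨g, hg, rfl⟩)
  rwa [LinearMap.sub_apply, Module.End.one_apply, sub_eq_zero] at this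

end Unipotent

/-- Kolchin's fixed-vector theorem: a subgroup `G` of `GL(n,ℂ)` all of whose elements
are unipotent (`(g - 1)^n = 0`) has a common nonzero fixed vector `v ∈ ℂ^n`. -/
theorem kolchin_common_fixed_vector (n : ℕ) (hn : 0 < n)
    (G : Subgroup (Matrix.GeneralLinearGroup (Fin n) ℂ))
    (hG : ∀ g ∈ G, ((g : Matrix (Fin n) (Fin n) ℂ) - 1) ^ n = 0) :
    ∃ v : Fin n → ℂ, v ≠ 0 ∧
      ∀ g ∈ G, Matrix.mulVec (g : Matrix (Fin n) (Fin n) ℂ) v = v := by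
  have : Nonempty (Fin n) := ⟨⟨0, hn⟩⟩
  let S : Submonoid (End ℂ (Fin n → ℂ)) :=
    G.toSubmonoid.map (Matrix.toLinAlgEquiv'.toMonoidHom.comp (Units.coeHom _))
  have hS : ∀ g ∈ S, IsNilpotent (g - 1) := by
    rintro _ ⟨g, hg, rfl⟩
    refine ⟨n, ?_⟩
    change (Matrix.toLinAlgEquiv' (g : Matrix (Fin n) (Fin n) ℂ) - 1) ^ n = 0
    rw [← map_one Matrix.toLinAlgEquiv', ← map_sub, ← map_pow, hG g hg, map_zero]
  obtain ⟨v, hv0, hv⟩ := S.exists_ne_zero_forall_apply_eq_self_of_isNilpotent_sub_one hS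
  exact ⟨v, hv0, fun g hg ↦ by simpa using hv _ ⟨g, hg, rfl⟩⟩
end

section
/- Let X be a compact complex manifold satisfying: every holomorphic function on X is constant. Suppose φ_{s+1}, φ_s, …, φ₁ are smooth vector-valued functions on X satisfying the triangular system ∂̄φ_j + Σ_{k=j+1}^{s+1} ω_{jk}^{0,1} φ_k = 0 for j = 1,…,s+1 (with the convention that the j = s+1 equation reads ∂̄φ_{s+1} = 0), where each ω_{jk}^{0,1} is a matrix of (0,1)-forms with ∂ω_{jk}^{0,1} = 0, and where the Hodge decomposition Ker(∂̄ on (0,1)-forms) = ∂̄(A⁰) ⊕ Harm^{0,1} holds and ∂-closed ∂̄-closed (0,1)-forms are harmonic. Then all φ_j are constant and Σ_{k=j+1}^{s+1} ω_{jk}^{0,1} φ_k = 0 for every j. -/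
/-!
Downward induction on the block index. For a row `p`, every `φ q` with a nonzero coefficient
`ω p q` lies in a strictly later block, hence is already known to be constant; constants commute
with `∂`, so `τ := Σ_q φ_q ω_{pq}` is `∂`-closed. The equation `∂̄φ_p + τ = 0` makes `τ` also
`∂̄`-exact, hence `∂̄`-closed, hence harmonic, and a `∂̄`-exact harmonic form vanishes. Then
`∂̄φ_p = 0`, so `φ_p` is holomorphic and therefore constant.
-/

theorem eq_zero_of_pd_eq_zero_of_eq_dbar {R A0 Ω01 Ω02 Ω11 : Type*} [Semiring R]
    [AddCommMonoid A0] [Module R A0] [AddCommMonoid Ω01] [Module R Ω01]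
    [AddCommMonoid Ω02] [Module R Ω02] [AddCommMonoid Ω11] [Module R Ω11]
    {dbar0 : A0 →ₗ[R] Ω01} {dbar1 : Ω01 →ₗ[R] Ω02} {pd1 : Ω01 →ₗ[R] Ω11}
    (hdbar2 : ∀ f : A0, dbar1 (dbar0 f) = 0) {Harm : Submodule R Ω01}
    (hharm : ∀ τ : Ω01, pd1 τ = 0 → dbar1 τ = 0 → τ ∈ Harm)
    (hhodge : ∀ τ ∈ Harm, (∃ f : A0, dbar0 f = τ) → τ = 0)
    {τ : Ω01} (hpd : pd1 τ = 0) {f : A0} (hf : dbar0 f = τ) : τ = 0 :=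
  hhodge τ (hharm τ hpd (hf ▸ hdbar2 f)) ⟨f, hf⟩

theorem exists_eq_algebraMap_and_eq_zero_of_dbar_add_eq_zero {R A0 Ω01 Ω02 Ω11 : Type*}
    [CommSemiring R] [Ring A0] [Algebra R A0] [AddCommGroup Ω01] [Module R Ω01]
    [AddCommMonoid Ω02] [Module R Ω02] [AddCommMonoid Ω11] [Module R Ω11]
    {dbar0 : A0 →ₗ[R] Ω01} {dbar1 : Ω01 →ₗ[R] Ω02} {pd1 : Ω01 →ₗ[R] Ω11}
    (hholo : ∀ f : A0, dbar0 f = 0 → ∃ c : R, f = algebraMap R A0 c)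
    (hdbar2 : ∀ f : A0, dbar1 (dbar0 f) = 0) {Harm : Submodule R Ω01}
    (hharm : ∀ τ : Ω01, pd1 τ = 0 → dbar1 τ = 0 → τ ∈ Harm)
    (hhodge : ∀ τ ∈ Harm, (∃ f : A0, dbar0 f = τ) → τ = 0)
    {f : A0} {τ : Ω01} (heq : dbar0 f + τ = 0) (hpd : pd1 τ = 0) :
    (∃ c : R, f = algebraMap R A0 c) ∧ τ = 0 := by
  have hτ : τ = 0 := eq_zero_of_pd_eq_zero_of_eq_dbar hdbar2 hharm hhodge hpd
    (f := -f) (by rw [map_neg, neg_eq_iff_add_eq_zero, heq])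
  rw [hτ, add_zero] at heq
  exact ⟨hholo f heq, hτ⟩

theorem map_sum_smul_eq_zero_of_algebraMap {R A0 Ω01 Ω11 ι : Type*} [Fintype ι]
    [CommSemiring R] [Semiring A0] [Algebra R A0] [AddCommMonoid Ω01] [Module R Ω01]
    [Module A0 Ω01] [IsScalarTower R A0 Ω01] [AddCommMonoid Ω11] [Module R Ω11]
    (pd1 : Ω01 →ₗ[R] Ω11) {φ : ι → A0} {ω : ι → Ω01} (hpd : ∀ q, pd1 (ω q) = 0)
    (hconst : ∀ q, ω q ≠ 0 → ∃ c : R, φ q = algebraMap R A0 c) :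
    pd1 (∑ q, φ q • ω q) = 0 := by
  refine (map_sum pd1 _ _).trans (Finset.sum_eq_zero fun q _ => ?_)
  by_cases hω : ω q = 0
  · rw [hω, smul_zero, map_zero]
  · obtain ⟨c, hc⟩ := hconst q hω
    rw [hc, algebraMap_smul, map_smul, hpd, smul_zero]

/-- The downward-induction core of Lemma 6.1: on a compact complex manifold where all
holomorphic functions are constant, a solution `φ` of the triangular system
`∂̄φ_j + Σ_k ω_{jk}^{0,1} φ_k = 0` with strictly block-upper-triangular coefficient
matrix `(ω_{jk}^{0,1})` of `∂`-closed `(0,1)`-forms is constant, and all the sums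
`Σ_k ω_{jk}^{0,1} φ_k` vanish.  Here `A0` models smooth functions (constants being the
image of `algebraMap ℂ A0`), `Ω01`, `Ω02`, `Ω11` the forms of the indicated types,
`Harm` the harmonic `(0,1)`-forms; we assume that `∂`-closed `∂̄`-closed `(0,1)`-forms
are harmonic and that a `∂̄`-exact harmonic `(0,1)`-form vanishes (Hodge decomposition
for `∂̄`).  The vector-valued functions and matrix blocks are flattened: the block of
an index `p : Fin n` is `b p : Fin (s+1)`. -/
theorem triangular_dbar_system_solutions_constant
    {A0 Ω01 Ω02 Ω11 : Type*}
    [CommRing A0] [Algebra ℂ A0]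
    [AddCommGroup Ω01] [Module ℂ Ω01] [Module A0 Ω01] [IsScalarTower ℂ A0 Ω01]
    [AddCommGroup Ω02] [Module ℂ Ω02] [AddCommGroup Ω11] [Module ℂ Ω11]
    (dbar0 : A0 →ₗ[ℂ] Ω01) (dbar1 : Ω01 →ₗ[ℂ] Ω02) (pd1 : Ω01 →ₗ[ℂ] Ω11)
    (hholo : ∀ f : A0, dbar0 f = 0 → ∃ c : ℂ, f = algebraMap ℂ A0 c)
    (hdbar2 : ∀ f : A0, dbar1 (dbar0 f) = 0)
    (Harm : Submodule ℂ Ω01)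
    (hharm : ∀ τ : Ω01, pd1 τ = 0 → dbar1 τ = 0 → τ ∈ Harm)
    (hhodge : ∀ τ ∈ Harm, (∃ f : A0, dbar0 f = τ) → τ = 0)
    (n s : ℕ) (b : Fin n → Fin (s + 1))
    (ω : Fin n → Fin n → Ω01)
    (htri : ∀ p q, b q ≤ b p → ω p q = 0)
    (hpd : ∀ p q, pd1 (ω p q) = 0)
    (φ : Fin n → A0)
    (hsys : ∀ p, dbar0 (φ p) + ∑ q, φ q • ω p q = 0) :
    (∀ p, ∃ c : ℂ, φ p = algebraMap ℂ A0 c) ∧ (∀ p, ∑ q, φ q • ω p q = 0) := by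
  have hrow : ∀ p, (∃ c : ℂ, φ p = algebraMap ℂ A0 c) ∧ ∑ q, φ q • ω p q = 0 := by
    intro p
    induction p using (InvImage.wf b wellFounded_gt).induction with
    | _ p ih =>
      refine exists_eq_algebraMap_and_eq_zero_of_dbar_add_eq_zero hholo hdbar2 hharm hhodge
        (hsys p) (map_sum_smul_eq_zero_of_algebraMap pd1 (hpd p) fun q hω => ?_)
      exact (ih q (lt_of_not_ge fun hle => hω (htri p q hle))).1
  exact ⟨fun p => (hrow p).1, fun p => (hrow p).2⟩
end
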